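/- arXiv:1404.3977 — 3 statements merged into one kernel-verified Lean document; each statement's English description precedes it below -/
import Mathlib

section
/- Hitting distribution monotonicity: if y ∈ A ⊆ B ⊆ Z^2 and x ∈ B^c, then H_A(x,y) ≥ H_B(x,y). -/
open MeasureTheory
open scoped ENNReal

noncomputable section

/-- First hitting time of a set `A` by a path `p`, valued in `ℝ≥0∞` (`⊤` if never hit). -/
def hitTime {V : Type*} (p : ℕ → V) (A : Set V) : ℝ≥0∞ :=
  ⨅ t ∈ {t : ℕ | p t ∈ A}, (t : ℝ≥0∞)

/-- Position at time `t` of the random walk started at `x` with steps `X j`. -/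
def walk {Ω : Type*} (X : ℕ → Ω → ℤ × ℤ) (x : ℤ × ℤ) (t : ℕ) (ω : Ω) : ℤ × ℤ :=
  x + ∑ j ∈ Finset.range t, X j ω

/-- Hitting distribution `H_A(x,y) = P^x(S_{T_A} = y)`. -/
def hitDist {Ω : Type*} [MeasurableSpace Ω] (P : Measure Ω) (X : ℕ → Ω → ℤ × ℤ)
    (A : Set (ℤ × ℤ)) (x y : ℤ × ℤ) : ℝ≥0∞ :=
  P {ω | ∃ t : ℕ, hitTime (fun s => walk X x s ω) A = (t : ℝ≥0∞) ∧ walk X x t ω = y}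

/-- Hitting distribution monotonicity: if `y ∈ A ⊆ B ⊆ ℤ²` and `x ∈ B^c`, then
`H_A(x,y) ≥ H_B(x,y)`. -/
theorem hitDist_antitone {Ω : Type*} [MeasurableSpace Ω] (P : Measure Ω)
    [IsProbabilityMeasure P] (X : ℕ → Ω → ℤ × ℤ)
    (A B : Set (ℤ × ℤ)) (hAB : A ⊆ B) (x y : ℤ × ℤ) (hy : y ∈ A) (hx : x ∈ Bᶜ) :
    hitDist P X B x y ≤ hitDist P X A x y := by
  apply measure_mono
  rintro ω ⟨t, ht, hw⟩
  refine ⟨t, le_antisymm ?_ ?_, hw⟩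
  · exact iInf₂_le t (show walk X x t ω ∈ A from hw ▸ hy)
  · calc (t : ℝ≥0∞) = hitTime (fun s => walk X x s ω) B := ht.symm
      _ ≤ hitTime (fun s => walk X x s ω) A :=
        biInf_mono (fun i hi => hAB hi)

end
end

section
/- Two-set excursion Green's function bound: for states a, a' ∈ A with A, B, C partitioning the state space, G_A(a,a') ≤ G_{A∪B}(a,a') ≤ G_A(a,a') + (ρ_a/(1−ρ_{a'}))·G_A(a',a'), where ρ_x := P^x(T_B < T_C and the subsequent return to A also occurs before T_C). -/
open MeasureTheory ProbabilityTheory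
open scoped ENNReal

noncomputable section

/-- First hitting time of `A` strictly after time `T`. -/
def hitAfter {V : Type*} (p : ℕ → V) (A : Set V) (T : ℝ≥0∞) : ℝ≥0∞ :=
  ⨅ t ∈ {t : ℕ | T < (t : ℝ≥0∞) ∧ p t ∈ A}, (t : ℝ≥0∞)

/-- Green's function of visits to `y` from `x` before hitting `Eᶜ`. -/
def green {Ω : Type*} [MeasurableSpace Ω] (P : Measure Ω) (X : ℕ → Ω → ℤ × ℤ)
    (E : Set (ℤ × ℤ)) (x y : ℤ × ℤ) : ℝ≥0∞ :=
  ∑' j : ℕ, P {ω | walk X x j ω = y ∧ (j : ℝ≥0∞) < hitTime (fun t => walk X x t ω) Eᶜ}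

/-- `ρ_a = P^a(T_B < T_C, T*_A < T_C)`: starting from `a`, the walk reaches `B` before `C`
and afterwards returns to `A` before `C`. -/
def excRho {Ω : Type*} [MeasurableSpace Ω] (P : Measure Ω) (X : ℕ → Ω → ℤ × ℤ)
    (A B C : Set (ℤ × ℤ)) (a : ℤ × ℤ) : ℝ≥0∞ :=
  P {ω | hitTime (fun t => walk X a t ω) B < hitTime (fun t => walk X a t ω) C ∧
      hitAfter (fun t => walk X a t ω) A (hitTime (fun t => walk X a t ω) B) <
        hitTime (fun t => walk X a t ω) C}

/-! Split each visit to `a'` before `T_C` according to whether the walk has entered `B` by then.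
Visits before entering `B` are visits before leaving `A`, counted by `G_A(a, a')`. Otherwise cut
the path at its first visit to `a'` after `T_B`: the piece before is an excursion of the kind
counted by `ρ_a`, and, the increments being i.i.d., the piece after is a fresh walk from `a'`
killed on `C`. Summed over the first `n` times this gives `S_n(x) ≤ G_A(x, a') + ρ_x S_n(a')` for
the partial sums `S_n(x)` of `G_{A∪B}(x, a')`; at `x = a'` the finite quantity `S_n(a')` is then
at most `G_A(a', a') / (1 - ρ_{a'})`. -/

section Paths

variable {V : Type*} {p q : ℕ → V} {S : Set V}

theorem hitTime_le_of_mem {t : ℕ} (ht : p t ∈ S) : hitTime p S ≤ t := iInf₂_le t ht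

theorem hitAfter_le_of_mem {T : ℝ≥0∞} {t : ℕ} (hT : T < t) (ht : p t ∈ S) :
    hitAfter p S T ≤ t :=
  iInf₂_le t ⟨hT, ht⟩

theorem coe_lt_hitTime_iff {j : ℕ} : (j : ℝ≥0∞) < hitTime p S ↔ ∀ t ≤ j, p t ∉ S := by
  refine ⟨fun h t ht hS => ((hitTime_le_of_mem hS).trans (by exact_mod_cast ht)).not_gt h,
    fun h => ?_⟩
  calc (j : ℝ≥0∞) < (j + 1 : ℕ) := by exact_mod_cast j.lt_succ_self
    _ ≤ hitTime p S := le_iInf₂ fun t ht => by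
      exact_mod_cast Nat.succ_le_of_lt (not_le.mp fun htj => h t htj ht)

def FirstVisitAfterHit (B C : Set V) (a : V) (p : ℕ → V) (m : ℕ) : Prop :=
  p m = a ∧ (∃ s < m, p s ∈ B) ∧ (∀ t < m, (∃ s < t, p s ∈ B) → p t ≠ a) ∧ ∀ t < m, p t ∉ C

namespace FirstVisitAfterHit

variable {B C : Set V} {a : V} {m m' : ℕ}

theorem congr (h : FirstVisitAfterHit B C a p m) (hpq : ∀ t ≤ m, p t = q t) :
    FirstVisitAfterHit B C a q m := by
  obtain ⟨hm, ⟨s, hs, hsB⟩, hfirst, hC⟩ := h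
  refine ⟨hpq m le_rfl ▸ hm, ⟨s, hs, hpq s hs.le ▸ hsB⟩, fun t ht ⟨s, hst, hsB⟩ => ?_,
    fun t ht => hpq t ht.le ▸ hC t ht⟩
  rw [← hpq t ht.le]
  exact hfirst t ht ⟨s, hst, hpq s (hst.trans ht).le ▸ hsB⟩

theorem unique (h : FirstVisitAfterHit B C a p m) (h' : FirstVisitAfterHit B C a p m') :
    m = m' := by
  by_contra hne
  rcases Nat.lt_or_gt_of_ne hne with hlt | hlt
  · obtain ⟨s, hs, hsB⟩ := h.2.1
    exact h'.2.2.1 m hlt ⟨s, hs, hsB⟩ h.1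
  · obtain ⟨s, hs, hsB⟩ := h'.2.1
    exact h.2.2.1 m' hlt ⟨s, hs, hsB⟩ h'.1

theorem hitTime_lt {A : Set V} (h : FirstVisitAfterHit B C a p m) (haA : a ∈ A) (haC : a ∉ C) :
    hitTime p B < hitTime p C ∧ hitAfter p A (hitTime p B) < hitTime p C := by
  obtain ⟨hm, ⟨s, hs, hsB⟩, -, hC⟩ := h
  have hBm : hitTime p B < m := (hitTime_le_of_mem hsB).trans_lt (by exact_mod_cast hs)
  have hmC : (m : ℝ≥0∞) < hitTime p C := coe_lt_hitTime_iff.2 fun t ht =>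
    (Nat.lt_or_eq_of_le ht).elim (hC t) fun htm => htm ▸ hm ▸ haC
  exact ⟨hBm.trans hmC, (hitAfter_le_of_mem hBm (hm ▸ haA)).trans_lt hmC⟩

end FirstVisitAfterHit

theorem exists_firstVisitAfterHit {B C : Set V} {a : V} {j : ℕ} (hj : p j = a) (haB : a ∉ B)
    (hC : ∀ t ≤ j, p t ∉ C) (hB : ∃ s ≤ j, p s ∈ B) :
    ∃ m ≤ j, FirstVisitAfterHit B C a p m := by
  classical
  obtain ⟨s, hsj, hsB⟩ := hB
  have hsj' : s < j := lt_of_le_of_ne hsj fun h => haB (hj ▸ h ▸ hsB)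
  have hex : ∃ t, (∃ s < t, p s ∈ B) ∧ p t = a := ⟨j, ⟨s, hsj', hsB⟩, hj⟩
  have hmj : Nat.find hex ≤ j := Nat.find_min' hex ⟨⟨s, hsj', hsB⟩, hj⟩
  obtain ⟨hB', ha⟩ := Nat.find_spec hex
  exact ⟨Nat.find hex, hmj, ha, hB', fun t ht hBt hta => Nat.find_min hex ht ⟨hBt, hta⟩,
    fun t ht => hC t (ht.le.trans hmj)⟩

end Paths

theorem sum_range_sum_range_succ_mul_le {R : Type*} [CommSemiring R] [PartialOrder R]
    [CanonicallyOrderedAdd R] (f g : ℕ → R) (n : ℕ) :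
    ∑ j ∈ Finset.range n, ∑ m ∈ Finset.range (j + 1), f m * g (j - m) ≤
      (∑ m ∈ Finset.range n, f m) * ∑ k ∈ Finset.range n, g k := by
  rw [Finset.sum_comm' (t' := Finset.range n) (s' := fun m => Finset.Ico m n)
    (fun j m => by simp only [Finset.mem_range, Finset.mem_Ico]; omega), Finset.sum_mul]
  refine Finset.sum_le_sum fun m hm => ?_
  rw [← Finset.mul_sum, Finset.sum_Ico_eq_sum_range]
  simp only [Nat.add_sub_cancel_left]
  exact mul_le_mul_right (Finset.sum_le_sum_of_subset
    (Finset.range_subset_range.2 (Nat.sub_le n m))) (f m)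

theorem ENNReal.le_div_one_sub_of_le_add_mul {h g r : ℝ≥0∞} (hh : h ≠ ⊤) (hr : r < 1)
    (H : h ≤ g + r * h) : h ≤ g / (1 - r) := by
  rw [ENNReal.le_div_iff_mul_le (Or.inl (tsub_pos_of_lt hr).ne') (Or.inl (by simp)),
    ENNReal.mul_sub fun _ _ => hh, mul_one, mul_comm]
  exact tsub_le_iff_right.2 H

section Increments

variable {Ω β : Type*} [MeasurableSpace Ω] [MeasurableSpace β]

def increments (X : ℕ → Ω → β) (s m : ℕ) (ω : Ω) : Fin m → β := fun i => X (s + i) ω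

variable {X : ℕ → Ω → β} {P : Measure Ω} {μ : Measure β}

theorem measurable_increments (hX : ∀ j, Measurable (X j)) (s m : ℕ) :
    Measurable (increments X s m) :=
  measurable_pi_lambda _ fun i => hX (s + i)

theorem map_increments [IsProbabilityMeasure P] (hX : ∀ j, Measurable (X j))
    (hind : iIndepFun X P) (hlaw : ∀ j, P.map (X j) = μ) (s m : ℕ) :
    P.map (increments X s m) = Measure.pi fun _ => μ := by
  have hblock : iIndepFun (fun i : Fin m => X (s + i)) P :=
    hind.precomp fun i j hij => Fin.ext (Nat.add_left_cancel hij)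
  exact ((iIndepFun_iff_map_fun_eq_pi_map fun i => (hX _).aemeasurable).1 hblock).trans
    (by simp only [hlaw])

theorem measure_increments_preimage_eq [IsProbabilityMeasure P] (hX : ∀ j, Measurable (X j))
    (hind : iIndepFun X P) (hlaw : ∀ j, P.map (X j) = μ) (s s' m : ℕ)
    {F : Set (Fin m → β)} (hF : MeasurableSet F) :
    P (increments X s m ⁻¹' F) = P (increments X s' m ⁻¹' F) := by
  rw [← Measure.map_apply (measurable_increments hX s m) hF,
    ← Measure.map_apply (measurable_increments hX s' m) hF,
    map_increments hX hind hlaw, map_increments hX hind hlaw]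

theorem indepFun_increments (hX : ∀ j, Measurable (X j)) (hind : iIndepFun X P) (m k : ℕ) :
    IndepFun (increments X 0 m) (increments X m k) P := by
  have hindep := hind.indepFun_finset (Finset.range m) (Finset.Ico m (m + k))
    (Finset.disjoint_left.2 fun j hj hj' => by simp at hj hj'; omega) hX
  exact hindep.comp
    (φ := fun u (i : Fin m) => u ⟨0 + i, by simp⟩)
    (ψ := fun u (i : Fin k) => u ⟨m + i, by simp⟩)
    (measurable_pi_lambda _ fun _ => measurable_pi_apply _)
    (measurable_pi_lambda _ fun _ => measurable_pi_apply _)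

theorem measure_increments_inter_increments [IsProbabilityMeasure P]
    (hX : ∀ j, Measurable (X j)) (hind : iIndepFun X P) (hlaw : ∀ j, P.map (X j) = μ)
    {m k : ℕ} {E : Set (Fin m → β)} {F : Set (Fin k → β)} (hE : MeasurableSet E)
    (hF : MeasurableSet F) :
    P (increments X 0 m ⁻¹' E ∩ increments X m k ⁻¹' F) =
      P (increments X 0 m ⁻¹' E) * P (increments X 0 k ⁻¹' F) := by
  rw [(indepFun_increments hX hind m k).measure_inter_preimage_eq_mul _ _ hE hF,
    measure_increments_preimage_eq hX hind hlaw m 0 k hF]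

end Increments

def incPath {G : Type*} [AddCommMonoid G] {m : ℕ} (z : G) (v : Fin m → G) (t : ℕ) : G :=
  z + ∑ j ∈ Finset.range t, if h : j < m then v ⟨j, h⟩ else 0

section Walk

variable {Ω : Type*} {X : ℕ → Ω → ℤ × ℤ} {ω : Ω} {x y z : ℤ × ℤ}
  {E : Set (ℤ × ℤ)}

theorem walk_add_eq_incPath (s : ℕ) {m t : ℕ} (ht : t ≤ m) :
    walk X x (s + t) ω = incPath (walk X x s ω) (increments X s m ω) t := by
  simp only [walk, incPath, Finset.sum_range_add, add_assoc]
  congr 2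
  refine Finset.sum_congr rfl fun j hj => ?_
  rw [dif_pos ((Finset.mem_range.1 hj).trans_le ht)]
  rfl

theorem walk_eq_incPath {m t : ℕ} (ht : t ≤ m) :
    walk X x t ω = incPath x (increments X 0 m ω) t := by
  simpa [walk] using walk_add_eq_incPath (X := X) (x := x) (ω := ω) 0 ht

def visitEvent (X : ℕ → Ω → ℤ × ℤ) (E : Set (ℤ × ℤ)) (x y : ℤ × ℤ) (j : ℕ) : Set Ω :=
  {ω | walk X x j ω = y ∧ (j : ℝ≥0∞) < hitTime (fun t => walk X x t ω) Eᶜ}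

theorem green_eq_tsum [MeasurableSpace Ω] (P : Measure Ω) :
    green P X E x y = ∑' j, P (visitEvent X E x y j) := rfl

theorem mem_visitEvent_iff {j : ℕ} :
    ω ∈ visitEvent X E x y j ↔ walk X x j ω = y ∧ ∀ t ≤ j, walk X x t ω ∈ E := by
  simp only [visitEvent, Set.mem_ofPred_eq, coe_lt_hitTime_iff, Set.mem_compl_iff, not_not]

theorem green_mono [MeasurableSpace Ω] (P : Measure Ω) {E' : Set (ℤ × ℤ)} (h : E ⊆ E') :
    green P X E x y ≤ green P X E' x y :=
  ENNReal.tsum_le_tsum fun _ => measure_mono fun _ hω =>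
    mem_visitEvent_iff.2 ⟨(mem_visitEvent_iff.1 hω).1, fun t ht => h ((mem_visitEvent_iff.1 hω).2 t ht)⟩

def pathVisitSet (E : Set (ℤ × ℤ)) (z y : ℤ × ℤ) (k : ℕ) : Set (Fin k → ℤ × ℤ) :=
  {v | incPath z v k = y ∧ ∀ t ≤ k, incPath z v t ∈ E}

theorem increments_mem_pathVisitSet_iff {s k : ℕ} (hz : walk X x s ω = z) :
    increments X s k ω ∈ pathVisitSet E z y k ↔
      walk X x (s + k) ω = y ∧ ∀ t ≤ k, walk X x (s + t) ω ∈ E := by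
  subst hz
  simp only [pathVisitSet, Set.mem_ofPred_eq, ← walk_add_eq_incPath s le_rfl]
  exact and_congr_right fun _ => forall₂_congr fun t ht => by rw [walk_add_eq_incPath s ht]

theorem visitEvent_eq_preimage (k : ℕ) :
    visitEvent X E x y k = increments X 0 k ⁻¹' pathVisitSet E x y k := by
  ext ω
  rw [Set.mem_preimage, increments_mem_pathVisitSet_iff (x := x) (s := 0) (by simp [walk]),
    mem_visitEvent_iff]
  simp only [zero_add]

end Walk

section Excursion

variable {Ω : Type*}

def excursionEvent (X : ℕ → Ω → ℤ × ℤ) (B C : Set (ℤ × ℤ)) (x a : ℤ × ℤ) (m : ℕ) : Set Ω :=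
  increments X 0 m ⁻¹' {v | FirstVisitAfterHit B C a (incPath x v) m}

variable {X : ℕ → Ω → ℤ × ℤ} {A B C : Set (ℤ × ℤ)} {x a : ℤ × ℤ}

theorem mem_excursionEvent_iff {m : ℕ} {ω : Ω} :
    ω ∈ excursionEvent X B C x a m ↔ FirstVisitAfterHit B C a (fun t => walk X x t ω) m :=
  ⟨fun h => h.congr fun _ ht => (walk_eq_incPath ht).symm,
    fun h => h.congr fun _ ht => walk_eq_incPath ht⟩

theorem visitEvent_subset_union (hA : (B ∪ C)ᶜ ⊆ A) (haB : a ∉ B) (j : ℕ) :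
    visitEvent X Cᶜ x a j ⊆ visitEvent X A x a j ∪
      ⋃ m ∈ Finset.range (j + 1),
        excursionEvent X B C x a m ∩ increments X m (j - m) ⁻¹' pathVisitSet Cᶜ a a (j - m) := by
  intro ω hω
  obtain ⟨hj, hC⟩ := mem_visitEvent_iff.1 hω
  by_cases hB : ∃ s ≤ j, walk X x s ω ∈ B
  · obtain ⟨m, hmj, hm⟩ := exists_firstVisitAfterHit hj haB hC hB
    refine Or.inr (Set.mem_biUnion (Finset.mem_range_succ_iff.2 hmj)
      ⟨mem_excursionEvent_iff.2 hm, ?_⟩)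
    rw [Set.mem_preimage, increments_mem_pathVisitSet_iff hm.1, Nat.add_sub_cancel' hmj]
    exact ⟨hj, fun t ht => hC (m + t) (by omega)⟩
  · push Not at hB
    exact Or.inl (mem_visitEvent_iff.2 ⟨hj, fun t ht => hA fun h => h.elim (hB t ht) (hC t ht)⟩)

variable [MeasurableSpace Ω] {P : Measure Ω} {μ : Measure (ℤ × ℤ)}

/-- At the end of the excursion the walk restarts afresh from `a`: the increments after time `m`
are independent of those before and have the same law. -/
theorem measure_visitEvent_le [IsProbabilityMeasure P] (hX : ∀ j, Measurable (X j)) (hind : iIndepFun X P)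
    (hlaw : ∀ j, P.map (X j) = μ) (hA : (B ∪ C)ᶜ ⊆ A) (haB : a ∉ B) (j : ℕ) :
    P (visitEvent X Cᶜ x a j) ≤ P (visitEvent X A x a j) +
      ∑ m ∈ Finset.range (j + 1),
        P (excursionEvent X B C x a m) * P (visitEvent X Cᶜ a a (j - m)) := by
  refine (measure_mono (visitEvent_subset_union hA haB j)).trans
    ((measure_union_le _ _).trans (add_le_add le_rfl ((measure_biUnion_finset_le _ _).trans_eq
      (Finset.sum_congr rfl fun m _ => ?_))))
  rw [excursionEvent, measure_increments_inter_increments hX hind hlaw .of_discrete .of_discrete,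
    visitEvent_eq_preimage]

theorem sum_measure_excursionEvent_le (hX : ∀ j, Measurable (X j)) (haA : a ∈ A) (haC : a ∉ C)
    (n : ℕ) : ∑ m ∈ Finset.range n, P (excursionEvent X B C x a m) ≤ excRho P X A B C x := by
  rw [← measure_biUnion_finset (fun m _ m' _ hne => Set.disjoint_left.2 fun _ h h' =>
      hne ((mem_excursionEvent_iff.1 h).unique (mem_excursionEvent_iff.1 h')))
    fun m _ => measurable_increments hX 0 m .of_discrete]
  exact measure_mono (Set.iUnion₂_subset fun _ _ _ h =>
    (mem_excursionEvent_iff.1 h).hitTime_lt haA haC)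

theorem sum_range_measure_visitEvent_le [IsProbabilityMeasure P] (hX : ∀ j, Measurable (X j)) (hind : iIndepFun X P)
    (hlaw : ∀ j, P.map (X j) = μ) (hA : (B ∪ C)ᶜ ⊆ A) (haA : a ∈ A) (haB : a ∉ B)
    (haC : a ∉ C) (n : ℕ) :
    ∑ j ∈ Finset.range n, P (visitEvent X Cᶜ x a j) ≤
      green P X A x a + excRho P X A B C x * ∑ k ∈ Finset.range n, P (visitEvent X Cᶜ a a k) := by
  calc ∑ j ∈ Finset.range n, P (visitEvent X Cᶜ x a j)
      ≤ ∑ j ∈ Finset.range n, P (visitEvent X A x a j) +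
          ∑ j ∈ Finset.range n, ∑ m ∈ Finset.range (j + 1),
            P (excursionEvent X B C x a m) * P (visitEvent X Cᶜ a a (j - m)) := by
        rw [← Finset.sum_add_distrib]
        exact Finset.sum_le_sum fun j _ => measure_visitEvent_le hX hind hlaw hA haB j
    _ ≤ green P X A x a + (∑ m ∈ Finset.range n, P (excursionEvent X B C x a m)) *
          ∑ k ∈ Finset.range n, P (visitEvent X Cᶜ a a k) := by
        rw [green_eq_tsum]
        exact add_le_add (ENNReal.sum_le_tsum _) (sum_range_sum_range_succ_mul_le
          (fun m => P (excursionEvent X B C x a m)) (fun k => P (visitEvent X Cᶜ a a k)) n)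
    _ ≤ _ := by gcongr; exact sum_measure_excursionEvent_le hX haA haC n

end Excursion

theorem green_two_set_excursion_bound_general {Ω : Type*} [MeasurableSpace Ω] (P : Measure Ω)
    [IsProbabilityMeasure P] (X : ℕ → Ω → ℤ × ℤ) (hX : ∀ j, Measurable (X j))
    (μ : Measure (ℤ × ℤ))
    (hind : iIndepFun X P)
    (hlaw : ∀ j, Measure.map (X j) P = μ)
    (A B C : Set (ℤ × ℤ)) (hcover : A ∪ B ∪ C = Set.univ)
    (hAB : Disjoint A B) (hAC : Disjoint A C) (hBC : Disjoint B C)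
    (a a' : ℤ × ℤ) (ha' : a' ∈ A)
    (hρ : excRho P X A B C a' < 1) :
    green P X A a a' ≤ green P X (A ∪ B) a a' ∧
    green P X (A ∪ B) a a' ≤
      green P X A a a' +
        (excRho P X A B C a / (1 - excRho P X A B C a')) * green P X A a' a' := by
  have hAB_eq : A ∪ B = Cᶜ := le_antisymm (hAC.union_left hBC).subset_compl_right
    (Set.compl_subset_iff_union.2 (by rw [Set.union_comm, hcover]))
  have hA : (B ∪ C)ᶜ ⊆ A := Set.compl_subset_iff_union.2 (by
    rw [Set.union_comm, ← Set.union_assoc, hcover])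
  have key := fun x => sum_range_measure_visitEvent_le (x := x) hX hind hlaw hA ha'
    (Set.disjoint_left.1 hAB ha') (Set.disjoint_left.1 hAC ha')
  refine ⟨green_mono P Set.subset_union_left, ?_⟩
  rw [hAB_eq, green_eq_tsum, ENNReal.tsum_eq_iSup_nat]
  refine iSup_le fun n => ?_
  have hreturns : ∑ k ∈ Finset.range n, P (visitEvent X Cᶜ a' a' k) ≤
      green P X A a' a' / (1 - excRho P X A B C a') :=
    ENNReal.le_div_one_sub_of_le_add_mul (ENNReal.sum_ne_top.2 fun _ _ => measure_ne_top _ _) hρ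
      (key a' n)
  calc ∑ j ∈ Finset.range n, P (visitEvent X Cᶜ a a' j)
      ≤ green P X A a a' +
          excRho P X A B C a * ∑ k ∈ Finset.range n, P (visitEvent X Cᶜ a' a' k) := key a n
    _ ≤ green P X A a a' +
          excRho P X A B C a * (green P X A a' a' / (1 - excRho P X A B C a')) := by
        gcongr
    _ = _ := by simp only [div_eq_mul_inv]; ring

/-- Two-set excursion Green's function bound: for a symmetric recurrent walk and a partition
`A ⊔ B ⊔ C` of `ℤ²`, for `a, a' ∈ A` with `ρ_{a'} < 1`:
`G_A(a,a') ≤ G_{A∪B}(a,a') ≤ G_A(a,a') + (ρ_a/(1−ρ_{a'}))·G_A(a',a')`. -/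
theorem green_two_set_excursion_bound {Ω : Type*} [MeasurableSpace Ω] (P : Measure Ω)
    [IsProbabilityMeasure P] (X : ℕ → Ω → ℤ × ℤ) (hX : ∀ j, Measurable (X j))
    (μ : Measure (ℤ × ℤ)) [IsProbabilityMeasure μ]
    (hind : iIndepFun X P)
    (hlaw : ∀ j, Measure.map (X j) P = μ)
    (hsym : Measure.map (fun z : ℤ × ℤ => -z) μ = μ)
    (hrec : ∀ x y : ℤ × ℤ, ∀ᵐ ω ∂P, ∃ t : ℕ, walk X x t ω = y)
    (A B C : Set (ℤ × ℤ)) (hcover : A ∪ B ∪ C = Set.univ)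
    (hAB : Disjoint A B) (hAC : Disjoint A C) (hBC : Disjoint B C)
    (a a' : ℤ × ℤ) (ha : a ∈ A) (ha' : a' ∈ A)
    (hρ : excRho P X A B C a' < 1) :
    green P X A a a' ≤ green P X (A ∪ B) a a' ∧
    green P X (A ∪ B) a a' ≤
      green P X A a a' +
        (excRho P X A B C a / (1 - excRho P X A B C a')) * green P X A a' a' :=
  green_two_set_excursion_bound_general P X hX μ hind hlaw A B C hcover hAB hAC hBC a a' ha' hρ

end
end

section
/- Counting upcrossing orderings: the number of increasing interleavings of u(k) upcrossings from level k−1 to k among and before u(k+1) upcrossings from level k to k+1, over levels k = ρn,…,n−1 with prescribed counts m_k, equals the product over k of binom(m_{k+1} + m_k − 1, m_k). -/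
/-!
Let `r` be the lowest level. Deleting every excursion `r, r - 1` that precedes a visit of `r`
turns an admissible path into an admissible path for the levels `r + 1, …, n`; since that path
stays at or above `r` and ends at `n > r`, each of its visits to `r` is followed by an upcrossing
of `r + 1`, so it visits `r` exactly `m (r + 1)` times. Conversely the original path is recovered
by choosing how many of the `m r` excursions are inserted before each of these visits, i.e. a
weak composition of `m r` into `m (r + 1)` parts, of which there are
`(m (r + 1) + m r - 1).choose (m r)`. Descending induction on `r` ends at `r = n`, where the
only admissible path alternates between `n - 1` and `n`.
-/

namespace Upcrossing

def IsStep (a b : ℤ) : Prop := |b - a| = 1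

lemma IsStep.eq_add_one_or_eq_sub_one {a b : ℤ} (h : IsStep a b) : b = a + 1 ∨ b = a - 1 := by
  unfold IsStep at h; grind

lemma eq_of_isChain_isStep {a : ℤ} {l₁ l₂ : List ℤ} (h₁ : l₁.IsChain IsStep)
    (h₂ : l₂.IsChain IsStep) (hb₁ : ∀ x ∈ l₁, a ≤ x ∧ x ≤ a + 1)
    (hb₂ : ∀ x ∈ l₂, a ≤ x ∧ x ≤ a + 1)
    (hhead : l₁.head? = l₂.head?) (hlen : l₁.length = l₂.length) : l₁ = l₂ := by
  induction l₁ generalizing l₂ with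
  | nil => exact (List.length_eq_zero_iff.1 hlen.symm).symm
  | cons x t₁ ih =>
    obtain ⟨y, t₂, rfl⟩ := List.exists_cons_of_length_eq_add_one hlen.symm
    obtain rfl : x = y := by simpa using hhead
    refine congrArg (x :: ·) (ih h₁.tail h₂.tail (fun z hz => hb₁ z (by simp [hz]))
      (fun z hz => hb₂ z (by simp [hz])) ?_ (by simpa using hlen))
    rcases t₁ with _ | ⟨u, t₁⟩ <;> rcases t₂ with _ | ⟨v, t₂⟩
    · rfl
    · simp at hlen
    · simp at hlen
    · have hu := (List.isChain_cons_cons.1 h₁).1.eq_add_one_or_eq_sub_one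
      have hv := (List.isChain_cons_cons.1 h₂).1.eq_add_one_or_eq_sub_one
      have := hb₁ u (by simp); have := hb₂ v (by simp); have := hb₁ x (by simp)
      simp only [List.head?_cons, Option.some.injEq]
      omega

def upcrossings (k : ℤ) : List ℤ → ℕ
  | [] => 0
  | a :: l => (if a = k - 1 ∧ l.head? = some k then 1 else 0) + upcrossings k l

@[simp] lemma upcrossings_nil (k : ℤ) : upcrossings k [] = 0 := rfl

lemma upcrossings_cons (k a : ℤ) (l : List ℤ) :
    upcrossings k (a :: l) = (if a = k - 1 ∧ l.head? = some k then 1 else 0) + upcrossings k l :=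
  rfl

lemma upcrossings_eq_zero {k : ℤ} {l : List ℤ} (h : k - 1 ∉ l) : upcrossings k l = 0 := by
  induction l with
  | nil => rfl
  | cons a l ih =>
    rw [List.mem_cons, not_or] at h
    simp [upcrossings_cons, ih h.2, Ne.symm h.1]

lemma count_eq_upcrossings {r : ℤ} {l : List ℤ} (hl : l.IsChain IsStep)
    (hr : ∀ x ∈ l, r ≤ x) (hlast : l.getLast? ≠ some r) : l.count r = upcrossings (r + 1) l := by
  induction l with
  | nil => rfl
  | cons a l ih =>
    rcases l with _ | ⟨b, l⟩
    · simp_all [upcrossings_cons]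
    · have hab := (List.isChain_cons_cons.1 hl).1.eq_add_one_or_eq_sub_one
      have hb := hr b (by simp)
      rw [List.count_cons, upcrossings_cons,
        ih hl.tail (fun x hx => hr x (List.mem_cons_of_mem a hx))
          (by rwa [List.getLast?_cons_cons] at hlast)]
      simp only [beq_iff_eq, List.head?_cons, Option.some.injEq]
      split_ifs <;> omega

lemma upcrossings_eq_card_filter (k c : ℤ) (l : List ℤ) :
    upcrossings k l = ((Finset.range (l.length - 1)).filter
      (fun i => l.getD i c = k - 1 ∧ l.getD (i + 1) c = k)).card := by
  induction l with
  | nil => rfl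
  | cons a l ih =>
    rcases l with _ | ⟨b, l⟩
    · simp [upcrossings_cons]
    · rw [upcrossings_cons, ih, Finset.card_filter, Finset.card_filter]
      simp only [List.length_cons, Nat.add_sub_cancel]
      rw [Finset.sum_range_succ']
      simp only [List.getD_cons_succ, List.getD_cons_zero, List.head?_cons, Option.some.injEq]
      exact add_comm _ _

def dips (r : ℤ) : ℕ → List ℤ
  | 0 => []
  | c + 1 => r :: (r - 1) :: dips r c

/-- `insertDips r t cs` inserts `cs[i]` excursions `r, r - 1` before the `i`-th occurrence of `r`
in `t` (missing entries of `cs` count as `0`). -/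
def insertDips (r : ℤ) : List ℤ → List ℕ → List ℤ
  | [], _ => []
  | a :: t, cs =>
    if a = r then dips r cs.headI ++ r :: insertDips r t cs.tail else a :: insertDips r t cs

variable {r : ℤ}

@[simp] lemma insertDips_nil (cs : List ℕ) : insertDips r [] cs = [] := rfl

@[simp] lemma insertDips_self_cons (t : List ℤ) (c : ℕ) (cs : List ℕ) :
    insertDips r (r :: t) (c :: cs) = dips r c ++ r :: insertDips r t cs := by
  simp [insertDips]

@[simp] lemma insertDips_cons_of_ne {a : ℤ} (ha : a ≠ r) (t : List ℤ) (cs : List ℕ) :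
    insertDips r (a :: t) cs = a :: insertDips r t cs := by
  simp [insertDips, ha]

lemma head?_dips_append_cons (c : ℕ) (x : List ℤ) : (dips r c ++ r :: x).head? = some r := by
  cases c <;> rfl

lemma upcrossings_dips_append_cons (k : ℤ) (c : ℕ) (x : List ℤ) :
    upcrossings k (dips r c ++ r :: x) = (if k = r then c else 0) + upcrossings k (r :: x) := by
  induction c with
  | zero => simp [dips]
  | succ c ih =>
    simp only [dips, List.cons_append, upcrossings_cons, ih, head?_dips_append_cons,
      List.head?_cons, Option.some.injEq]
    split_ifs <;> omega

lemma isChain_dips_append_cons (c : ℕ) {x : List ℤ} (hx : (r :: x).IsChain IsStep) :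
    (dips r c ++ r :: x).IsChain IsStep := by
  induction c with
  | zero => exact hx
  | succ c ih =>
    refine List.isChain_cons_cons.2 ⟨by simp [IsStep], List.isChain_cons.2 ⟨?_, ih⟩⟩
    rw [List.append_eq, head?_dips_append_cons]
    simp [IsStep]

lemma mem_dips {x : ℤ} {c : ℕ} (h : x ∈ dips r c) : x = r ∨ x = r - 1 := by
  induction c with
  | zero => simp [dips] at h
  | succ c ih =>
    simp only [dips, List.mem_cons] at h
    tauto

lemma dips_append_cancel {c₁ c₂ : ℕ} {x₁ x₂ : List ℤ}
    (h : dips r c₁ ++ r :: x₁ = dips r c₂ ++ r :: x₂) (h₁ : x₁.head? ≠ some (r - 1))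
    (h₂ : x₂.head? ≠ some (r - 1)) : c₁ = c₂ ∧ x₁ = x₂ := by
  induction c₁ generalizing c₂ with
  | zero =>
    cases c₂ with
    | zero => simpa [dips] using h
    | succ c₂ => simp [dips] at h; simp [h] at h₁
  | succ c₁ ih =>
    cases c₂ with
    | zero => simp [dips] at h; simp [← h] at h₂
    | succ c₂ =>
      simp only [dips, List.cons_append, List.cons.injEq, true_and] at h
      simpa using ih h

lemma head?_insertDips (t : List ℤ) (cs : List ℕ) : (insertDips r t cs).head? = t.head? := by
  cases t with
  | nil => rfl
  | cons a t =>
    by_cases ha : a = r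
    · subst a
      simp only [insertDips, if_true, List.head?_cons]
      exact head?_dips_append_cons _ _
    · simp [ha]

lemma getLast?_insertDips (t : List ℤ) (cs : List ℕ) :
    (insertDips r t cs).getLast? = t.getLast? := by
  induction t generalizing cs with
  | nil => rfl
  | cons a t ih =>
    by_cases ha : a = r
    · simp [insertDips, ha, List.getLast?_append, List.getLast?_cons, ih]
    · simp [ha, List.getLast?_cons, ih]

lemma mem_insertDips {x : ℤ} {t : List ℤ} {cs : List ℕ} (h : x ∈ insertDips r t cs) :
    x = r - 1 ∨ x ∈ t := by
  induction t generalizing cs with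
  | nil => simp at h
  | cons a t ih =>
    by_cases ha : a = r
    · subst a
      simp only [insertDips, if_true, List.mem_append, List.mem_cons] at h
      rcases h with h | h | h
      · rcases mem_dips h with h | h <;> simp [h]
      · simp [h]
      · exact (ih h).imp_right (List.mem_cons_of_mem r)
    · rw [insertDips_cons_of_ne ha, List.mem_cons] at h
      rcases h with h | h
      · simp [h]
      · exact (ih h).imp_right (List.mem_cons_of_mem a)

lemma mem_insertDips_of_mem {x : ℤ} {t : List ℤ} (cs : List ℕ) (h : x ∈ t) :
    x ∈ insertDips r t cs := by
  induction t generalizing cs with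
  | nil => simp at h
  | cons a t ih =>
    by_cases ha : a = r
    · rcases List.mem_cons.1 h with rfl | h
      · simp [insertDips, ha]
      · simp [insertDips, ha, ih _ h]
    · rcases List.mem_cons.1 h with rfl | h
      · simp [ha]
      · simp [ha, ih _ h]

lemma isChain_insertDips {t : List ℤ} (ht : t.IsChain IsStep) (cs : List ℕ) :
    (insertDips r t cs).IsChain IsStep := by
  induction t generalizing cs with
  | nil => exact .nil
  | cons a t ih =>
    have hhead : ∀ y ∈ (insertDips r t cs.tail).head?, IsStep a y := by
      rw [head?_insertDips]; exact (List.isChain_cons.1 ht).1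
    by_cases ha : a = r
    · subst a
      simpa [insertDips] using isChain_dips_append_cons cs.headI
        (List.isChain_cons.2 ⟨hhead, ih ht.tail _⟩)
    · rw [insertDips_cons_of_ne ha]
      refine List.isChain_cons.2 ⟨?_, ih ht.tail _⟩
      rw [head?_insertDips]; exact (List.isChain_cons.1 ht).1

lemma length_dips (c : ℕ) : (dips r c).length = 2 * c := by
  induction c with
  | zero => rfl
  | succ c ih => simp [dips, ih]; ring

lemma length_insertDips {t : List ℤ} {cs : List ℕ} (h : cs.length = t.count r) :
    (insertDips r t cs).length = t.length + 2 * cs.sum := by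
  induction t generalizing cs with
  | nil => simp_all
  | cons a t ih =>
    by_cases ha : a = r
    · subst a
      obtain ⟨c, cs, rfl⟩ :=
        List.exists_cons_of_length_eq_add_one (h.trans List.count_cons_self)
      simp only [insertDips_self_cons, List.length_append, List.length_cons, length_dips,
        ih (by simpa using h), List.sum_cons]
      ring
    · rw [List.count_cons_of_ne ha] at h
      simp [ha, ih h]; ring

lemma upcrossings_insertDips (k : ℤ) {t : List ℤ} {cs : List ℕ} (h : cs.length = t.count r) :
    upcrossings k (insertDips r t cs) = upcrossings k t + if k = r then cs.sum else 0 := by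
  induction t generalizing cs with
  | nil => simp_all
  | cons a t ih =>
    by_cases ha : a = r
    · subst a
      obtain ⟨c, cs, rfl⟩ :=
        List.exists_cons_of_length_eq_add_one (h.trans List.count_cons_self)
      rw [insertDips_self_cons, upcrossings_dips_append_cons, upcrossings_cons, upcrossings_cons,
        head?_insertDips, ih (by simpa using h), List.sum_cons]
      split_ifs <;> omega
    · rw [List.count_cons_of_ne ha] at h
      rw [insertDips_cons_of_ne ha, upcrossings_cons, upcrossings_cons, head?_insertDips, ih h]
      ring

lemma head?_insertDips_ne {t : List ℤ} (ht : r - 1 ∉ t) (cs : List ℕ) :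
    (insertDips r t cs).head? ≠ some (r - 1) := by
  rw [head?_insertDips]
  exact fun h => ht (List.mem_of_head? h)

lemma insertDips_inj {t₁ t₂ : List ℤ} {cs₁ cs₂ : List ℕ} (ht₁ : r - 1 ∉ t₁)
    (ht₂ : r - 1 ∉ t₂) (hcs₁ : cs₁.length = t₁.count r) (hcs₂ : cs₂.length = t₂.count r)
    (h : insertDips r t₁ cs₁ = insertDips r t₂ cs₂) : t₁ = t₂ ∧ cs₁ = cs₂ := by
  induction t₁ generalizing t₂ cs₁ cs₂ with
  | nil =>
    have hhead := congrArg List.head? h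
    rw [head?_insertDips, head?_insertDips, List.head?_nil, eq_comm,
      List.head?_eq_none_iff] at hhead
    subst hhead
    simp_all
  | cons a t₁ ih =>
    have hhead := congrArg List.head? h
    rw [head?_insertDips, head?_insertDips] at hhead
    obtain ⟨t₂, rfl⟩ : ∃ t₂', t₂ = a :: t₂' := by
      cases t₂ with
      | nil => simp at hhead
      | cons b t₂ => exact ⟨t₂, by simpa using hhead.symm⟩
    rw [List.mem_cons, not_or] at ht₁ ht₂
    by_cases ha : a = r
    · subst a
      obtain ⟨c₁, cs₁, rfl⟩ :=
        List.exists_cons_of_length_eq_add_one (hcs₁.trans List.count_cons_self)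
      obtain ⟨c₂, cs₂, rfl⟩ :=
        List.exists_cons_of_length_eq_add_one (hcs₂.trans List.count_cons_self)
      rw [insertDips_self_cons, insertDips_self_cons] at h
      obtain ⟨rfl, htail⟩ :=
        dips_append_cancel h (head?_insertDips_ne ht₁.2 _) (head?_insertDips_ne ht₂.2 _)
      obtain ⟨rfl, rfl⟩ :=
        ih ht₁.2 ht₂.2 (by simpa using hcs₁) (by simpa using hcs₂) htail
      exact ⟨rfl, rfl⟩
    · rw [List.count_cons_of_ne ha] at hcs₁ hcs₂
      rw [insertDips_cons_of_ne ha, insertDips_cons_of_ne ha, List.cons.injEq] at h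
      obtain ⟨rfl, rfl⟩ := ih ht₁.2 ht₂.2 hcs₁ hcs₂ h.2
      exact ⟨rfl, rfl⟩

lemma insertDips_succ_cons (t : List ℤ) (c : ℕ) (cs : List ℕ) :
    insertDips r (r :: t) ((c + 1) :: cs) = r :: (r - 1) :: insertDips r (r :: t) (c :: cs) := by
  simp [dips]

lemma exists_insertDips_eq : ∀ {l : List ℤ}, l.IsChain IsStep → (∀ x ∈ l, r - 1 ≤ x) →
    l.head? ≠ some (r - 1) → l.getLast? ≠ some (r - 1) →
    ∃ t cs, insertDips r t cs = l ∧ cs.length = t.count r ∧ t.IsChain IsStep ∧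
      ∀ x ∈ t, r ≤ x
  | [], _, _, _, _ => ⟨[], [], rfl, rfl, .nil, by simp⟩
  | a :: l, hl, hr, hhead, hlast => by
    have ha : r ≤ a := by
      have := hr a List.mem_cons_self
      simp only [List.head?_cons, ne_eq, Option.some.injEq] at hhead
      omega
    by_cases hdip : l.head? = some (r - 1)
    · obtain ⟨b, l, rfl⟩ := List.exists_cons_of_ne_nil (l := l) (by rintro rfl; simp at hdip)
      obtain rfl : b = r - 1 := by simpa using hdip
      obtain ⟨hab, hl₁⟩ := List.isChain_cons_cons.1 hl
      have har : a = r := by have := hab.eq_add_one_or_eq_sub_one; omega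
      subst a
      obtain ⟨c, l, rfl⟩ := List.exists_cons_of_ne_nil (l := l) (by rintro rfl; simp at hlast)
      obtain ⟨hbc, hl₂⟩ := List.isChain_cons_cons.1 hl₁
      have hcr : c = r := by
        have := hr c (by simp); have := hbc.eq_add_one_or_eq_sub_one; omega
      subst c
      obtain ⟨t, cs, hts, hcs, ht, htr⟩ := exists_insertDips_eq hl₂
        (fun x hx => hr x (by simp [hx])) (by simp; omega)
        (by simpa [List.getLast?_cons_cons] using hlast)
      obtain ⟨t, rfl⟩ : ∃ t', t = r :: t' := by
        have := congrArg List.head? hts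
        rw [head?_insertDips, List.head?_cons] at this
        exact ⟨t.tail, List.eq_cons_of_mem_head? this⟩
      obtain ⟨d, cs, rfl⟩ :=
        List.exists_cons_of_length_eq_add_one (hcs.trans List.count_cons_self)
      exact ⟨r :: t, (d + 1) :: cs, by rw [insertDips_succ_cons, hts], by simpa using hcs, ht,
        htr⟩
    · obtain ⟨t, cs, rfl, hcs, ht, htr⟩ := exists_insertDips_eq hl.tail
        (fun x hx => hr x (List.mem_cons_of_mem a hx)) hdip
        (by rcases l with _ | ⟨b, l⟩ <;> simp_all [List.getLast?_cons_cons])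
      have hstep : ∀ y ∈ t.head?, IsStep a y := by
        rw [← head?_insertDips (r := r) t cs]; exact (List.isChain_cons.1 hl).1
      by_cases har : a = r
      · subst a
        exact ⟨r :: t, 0 :: cs, by simp [dips], by simp [hcs], List.isChain_cons.2 ⟨hstep, ht⟩,
          by simpa using htr⟩
      · refine ⟨a :: t, cs, by simp [har], by simp [List.count_cons_of_ne har, hcs],
          List.isChain_cons.2 ⟨hstep, ht⟩, by simpa [ha] using htr⟩
termination_by l => l.length

structure IsUpcrossingPath (r n : ℤ) (m : ℤ → ℕ) (l : List ℤ) : Prop where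
  length_eq : l.length = 2 * ∑ k ∈ Finset.Icc r n, m k
  head?_eq : l.head? = some (n - 1)
  getLast?_eq : l.getLast? = some n
  isChain : l.IsChain IsStep
  mem_bounds : ∀ x ∈ l, r - 1 ≤ x ∧ x ≤ n
  upcrossings_eq : ∀ k ∈ Finset.Icc r n, upcrossings k l = m k

variable {n : ℤ} {m : ℤ → ℕ}

lemma IsUpcrossingPath.count_eq {t : List ℤ} (ht : IsUpcrossingPath (r + 1) n m t) (hrn : r < n) :
    t.count r = m (r + 1) := by
  rw [count_eq_upcrossings ht.isChain (fun x hx => by linarith [(ht.mem_bounds x hx).1])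
    (by rw [ht.getLast?_eq]; simp; omega)]
  exact ht.upcrossings_eq _ (by simp; omega)

lemma isUpcrossingPath_insertDips_iff (hrn : r < n) {t : List ℤ} {cs : List ℕ}
    (ht : t.IsChain IsStep) (htr : ∀ x ∈ t, r ≤ x) (hcs : cs.length = t.count r) :
    IsUpcrossingPath r n m (insertDips r t cs) ↔
      IsUpcrossingPath (r + 1) n m t ∧ cs.sum = m r := by
  have hsum : ∑ k ∈ Finset.Icc r n, m k = m r + ∑ k ∈ Finset.Icc (r + 1) n, m k := by
    rw [← Finset.insert_Icc_add_one_left_eq_Icc hrn.le, Finset.sum_insert (by simp)]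
  have hups (k : ℤ) := upcrossings_insertDips k hcs
  have hups_r : upcrossings r t = 0 :=
    upcrossings_eq_zero fun h => by linarith [htr _ h]
  constructor
  · intro h
    have hsum_r : cs.sum = m r := by
      simpa [hups, hups_r] using h.upcrossings_eq r (by simp; omega)
    refine ⟨⟨?_, ?_, ?_, ht, ?_, ?_⟩, hsum_r⟩
    · have := h.length_eq
      rw [length_insertDips hcs, hsum, hsum_r] at this
      omega
    · rw [← head?_insertDips t cs]; exact h.head?_eq
    · rw [← getLast?_insertDips t cs]; exact h.getLast?_eq
    · exact fun x hx =>
        ⟨by linarith [htr x hx], (h.mem_bounds x (mem_insertDips_of_mem cs hx)).2⟩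
    · intro k hk
      simp only [Finset.mem_Icc] at hk
      simpa [hups, show k ≠ r by omega] using h.upcrossings_eq k (by simp; omega)
  · rintro ⟨h, hsum_r⟩
    refine ⟨?_, ?_, ?_, isChain_insertDips ht cs, ?_, ?_⟩
    · rw [length_insertDips hcs, h.length_eq, hsum, hsum_r]; ring
    · rw [head?_insertDips]; exact h.head?_eq
    · rw [getLast?_insertDips]; exact h.getLast?_eq
    · intro x hx
      rcases mem_insertDips hx with rfl | hx
      · omega
      · have := h.mem_bounds x hx; omega
    · intro k hk
      rw [hups]
      by_cases hkr : k = r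
      · simp [hkr, hups_r, hsum_r]
      · simp only [Finset.mem_Icc] at hk
        simpa [hkr] using h.upcrossings_eq k (by simp; omega)

lemma natCard_isUpcrossingPath_eq_mul (hrn : r < n) :
    Nat.card {l // IsUpcrossingPath r n m l} =
      Nat.card {t // IsUpcrossingPath (r + 1) n m t} *
        Nat.card {cs : List ℕ // cs.length = m (r + 1) ∧ cs.sum = m r} := by
  have htr {t : List ℤ} (ht : IsUpcrossingPath (r + 1) n m t) : ∀ x ∈ t, r ≤ x :=
    fun x hx => by linarith [(ht.mem_bounds x hx).1]
  have hmaps (p : {t // IsUpcrossingPath (r + 1) n m t} ×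
      {cs : List ℕ // cs.length = m (r + 1) ∧ cs.sum = m r}) :
      IsUpcrossingPath r n m (insertDips r p.1 p.2) :=
    (isUpcrossingPath_insertDips_iff hrn p.1.2.isChain (htr p.1.2)
      (p.2.2.1.trans (p.1.2.count_eq hrn).symm)).2 ⟨p.1.2, p.2.2.2⟩
  rw [← Nat.card_prod]
  refine (Nat.card_congr (Equiv.ofBijective (fun p => ⟨_, hmaps p⟩) ⟨?_, ?_⟩)).symm
  · rintro ⟨⟨t₁, ht₁⟩, ⟨cs₁, hlen₁, _⟩⟩ ⟨⟨t₂, ht₂⟩, ⟨cs₂, hlen₂, _⟩⟩ h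
    obtain ⟨rfl, rfl⟩ := insertDips_inj (fun h => by linarith [htr ht₁ _ h])
      (fun h => by linarith [htr ht₂ _ h]) (hlen₁.trans (ht₁.count_eq hrn).symm)
      (hlen₂.trans (ht₂.count_eq hrn).symm) (congrArg Subtype.val h)
    rfl
  · rintro ⟨l, hl⟩
    obtain ⟨t, cs, rfl, hcs, ht, htr⟩ := exists_insertDips_eq hl.isChain
      (fun x hx => (hl.mem_bounds x hx).1) (by rw [hl.head?_eq]; simp; omega)
      (by rw [hl.getLast?_eq]; simp; omega)
    obtain ⟨ht', hsum⟩ := (isUpcrossingPath_insertDips_iff hrn ht htr hcs).1 hl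
    exact ⟨⟨⟨t, ht'⟩, ⟨cs, hcs.trans (ht'.count_eq hrn), hsum⟩⟩, rfl⟩

lemma natCard_isUpcrossingPath_self (hm : 1 ≤ m n) :
    Nat.card {l // IsUpcrossingPath n n m l} = 1 := by
  rw [Nat.card_eq_one_iff_unique]
  refine ⟨⟨fun l₁ l₂ => Subtype.ext ?_⟩, ⟨⟨(n - 1) :: insertDips n [n] [m n - 1], ?_⟩⟩⟩
  · have hb (l : {l // IsUpcrossingPath n n m l}) : ∀ x ∈ l.1, n - 1 ≤ x ∧ x ≤ n - 1 + 1 :=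
      by simpa using l.2.mem_bounds
    exact eq_of_isChain_isStep l₁.2.isChain l₂.2.isChain (hb l₁) (hb l₂)
      (l₁.2.head?_eq.trans l₂.2.head?_eq.symm) (l₁.2.length_eq.trans l₂.2.length_eq.symm)
  · have hsum : ∑ k ∈ Finset.Icc n n, m k = m n := by simp
    refine ⟨?_, rfl, ?_, ?_, ?_, ?_⟩
    · rw [hsum, List.length_cons, length_insertDips (by simp)]
      simp; omega
    · simp [List.getLast?_cons]
    · refine List.isChain_cons.2 ⟨?_, isChain_insertDips (List.isChain_singleton n) _⟩
      rw [head?_insertDips]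
      simp [IsStep]
    · intro x hx
      rcases List.mem_cons.1 hx with rfl | hx
      · omega
      · rcases mem_insertDips hx with rfl | hx <;> simp_all
    · intro k hk
      obtain rfl : k = n := by simpa using hk
      rw [upcrossings_cons, head?_insertDips, upcrossings_insertDips _ (by simp)]
      simp [upcrossings_cons]; omega

lemma natCard_length_eq_and_sum_eq (p q : ℕ) :
    Nat.card {cs : List ℕ // cs.length = p ∧ cs.sum = q} = (p + q - 1).choose q := by
  let e : {cs : List ℕ // cs.length = p ∧ cs.sum = q} ≃ Sym (Fin p) q :=
    (Equiv.subtypeSubtypeEquivSubtypeInter (fun cs : List ℕ => cs.length = p) (·.sum = q)).symm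
      |>.trans
      (((Equiv.vectorEquivFin ℕ p).subtypeEquiv fun v => ?_).trans
        (Sym.equivNatSumOfFintype (Fin p) q).symm)
  · rw [Nat.card_congr e, Sym.natCard_sym_eq_choose, Nat.card_fin]
  · change v.toList.sum = q ↔ _
    rw [← List.sum_ofFn, Equiv.vectorEquivFin, Equiv.coe_fn_mk, ← List.Vector.toList_ofFn,
      List.Vector.ofFn_get]

lemma natCard_isUpcrossingPath (hrn : r ≤ n) (hm : 1 ≤ m n) :
    Nat.card {l // IsUpcrossingPath r n m l} =
      ∏ k ∈ Finset.Icc r (n - 1), (m (k + 1) + m k - 1).choose (m k) := by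
  induction r, hrn using Int.leInductionDown with
  | base => simp [natCard_isUpcrossingPath_self hm]
  | pred r hr ih =>
    rw [natCard_isUpcrossingPath_eq_mul (by omega), sub_add_cancel, ih, natCard_length_eq_and_sum_eq,
      ← Finset.insert_Icc_add_one_left_eq_Icc (by omega : r - 1 ≤ n - 1),
      Finset.prod_insert (by simp), sub_add_cancel, mul_comm]

/-- The sequence `j ↦ l[j - 1]` on `1, …, l.length`, padded with the value `c` at `0` and beyond
`l.length`, as in the sequences of the theorem. -/
def ofList (c : ℤ) (l : List ℤ) (j : ℕ) : ℤ := (c :: l).getD j c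

section ofList

variable {c : ℤ} {l : List ℤ}

lemma ofList_add_one {i : ℕ} (hi : i < l.length) : ofList c l (i + 1) = l[i] := by
  rw [ofList, List.getD_cons_succ, List.getD_eq_getElem _ _ hi]

lemma ofList_eq_of_length_lt {j : ℕ} (hj : j = 0 ∨ l.length < j) : ofList c l j = c := by
  rcases hj with rfl | hj
  · rfl
  · exact List.getD_eq_default _ _ (by simpa using hj)

lemma exists_ofList_eq {L : ℕ} {s : ℕ → ℤ} (hs : ∀ j, j = 0 ∨ L < j → s j = c) :
    ∃ l : List ℤ, l.length = L ∧ ofList c l = s := by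
  refine ⟨List.ofFn fun i : Fin L => s (i + 1), List.length_ofFn, funext fun j => ?_⟩
  rcases Nat.lt_or_ge L j with hj | hj
  · rw [hs j (.inr hj), ofList_eq_of_length_lt (.inr (by simpa using hj))]
  · cases j with
    | zero => exact (hs 0 (.inl rfl)).symm
    | succ i => simp [ofList_add_one (by simpa using hj : i < (List.ofFn _).length)]

lemma injOn_ofList (L : ℕ) : Set.InjOn (ofList c) {l | l.length = L} := by
  intro l₁ hl₁ l₂ hl₂ h
  refine List.ext_getElem (hl₁.trans hl₂.symm) fun i hi₁ hi₂ => ?_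
  simpa [ofList_add_one hi₁, ofList_add_one hi₂] using congrFun h (i + 1)

lemma head?_eq_some_ofList (hl : l ≠ []) : l.head? = some (ofList c l 1) := by
  obtain ⟨a, l, rfl⟩ := List.exists_cons_of_ne_nil hl
  rfl

lemma getLast?_eq_some_ofList (hl : l ≠ []) : l.getLast? = some (ofList c l l.length) := by
  have hlen : l.length - 1 < l.length := by
    have := List.length_pos_iff.2 hl; omega
  rw [List.getLast?_eq_getElem?, List.getElem?_eq_getElem hlen, ← ofList_add_one hlen,
    Nat.sub_add_cancel (List.length_pos_iff.2 hl)]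

lemma forall_ofList_iff (P : ℤ → Prop) :
    (∀ j, 1 ≤ j → j ≤ l.length → P (ofList c l j)) ↔ ∀ x ∈ l, P x := by
  rw [List.forall_mem_iff_getElem]
  constructor
  · intro h i hi
    simpa [ofList_add_one hi] using h (i + 1) (by omega) hi
  · intro h j hj₁ hj₂
    obtain ⟨i, rfl⟩ := Nat.exists_eq_add_of_le' hj₁
    simpa [ofList_add_one (Nat.lt_of_succ_le hj₂)] using h i (by omega)

lemma forall_ofList_iff_isChain (R : ℤ → ℤ → Prop) :
    (∀ j, 1 ≤ j → j < l.length → R (ofList c l j) (ofList c l (j + 1))) ↔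
      l.IsChain R := by
  rw [List.isChain_iff_getElem]
  constructor
  · intro h i hi
    simpa [ofList_add_one hi, ofList_add_one (Nat.lt_of_succ_lt hi)] using h (i + 1) (by omega) hi
  · intro h j hj₁ hj₂
    obtain ⟨i, rfl⟩ := Nat.exists_eq_add_of_le' hj₁
    simpa [ofList_add_one hj₂, ofList_add_one (Nat.lt_of_succ_lt hj₂)] using h i hj₂

lemma card_filter_ofList_eq_upcrossings (k : ℤ) :
    ((Finset.Ico 1 l.length).filter
      (fun j => ofList c l j = k - 1 ∧ ofList c l (j + 1) = k)).card = upcrossings k l := by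
  rw [upcrossings_eq_card_filter k c]
  refine Finset.card_nbij' (· - 1) (· + 1) ?_ ?_ ?_ ?_ <;> intro j hj <;>
    simp only [Finset.coe_filter, Finset.mem_Ico, Finset.mem_range, Set.mem_ofPred_eq] at hj ⊢
  · obtain ⟨i, rfl⟩ := Nat.exists_eq_add_of_le' hj.1.1
    exact ⟨by omega, hj.2⟩
  · exact ⟨by omega, hj.2⟩
  · omega
  · omega

end ofList

def admissibleSequences (r n : ℤ) (m : ℤ → ℕ) : Set (ℕ → ℤ) :=
  {s : ℕ → ℤ |
    s 1 = n - 1 ∧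
    s (2 * ∑ k ∈ Finset.Icc r n, m k) = n ∧
    (∀ j : ℕ, 1 ≤ j → j < 2 * ∑ k ∈ Finset.Icc r n, m k → |s (j + 1) - s j| = 1) ∧
    (∀ j : ℕ, 1 ≤ j → j ≤ 2 * ∑ k ∈ Finset.Icc r n, m k → r - 1 ≤ s j ∧ s j ≤ n) ∧
    (∀ j : ℕ, j = 0 ∨ 2 * ∑ k ∈ Finset.Icc r n, m k < j → s j = n) ∧
    (∀ k ∈ Finset.Icc r n,
      ((Finset.Ico 1 (2 * ∑ k' ∈ Finset.Icc r n, m k')).filter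
        (fun j => s j = k - 1 ∧ s (j + 1) = k)).card = m k)}

lemma admissibleSequences_eq_image (hrn : r ≤ n) (hm : 1 ≤ m n) :
    admissibleSequences r n m = ofList n '' {l | IsUpcrossingPath r n m l} := by
  have hne {l : List ℤ} (hl : l.length = 2 * ∑ k ∈ Finset.Icc r n, m k) : l ≠ [] := by
    have := Finset.single_le_sum (fun k _ => Nat.zero_le (m k)) (Finset.right_mem_Icc.2 hrn)
    rintro rfl; rw [List.length_nil] at hl; omega
  ext s
  constructor
  · rintro ⟨hhead, hlast, hstep, hbounds, hpad, hups⟩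
    obtain ⟨l, hlen, rfl⟩ := exists_ofList_eq hpad
    refine ⟨l, ⟨hlen, ?_, ?_, ?_, ?_, ?_⟩, rfl⟩
    · rw [head?_eq_some_ofList (hne hlen), hhead]
    · rw [getLast?_eq_some_ofList (hne hlen), hlen, hlast]
    · exact (forall_ofList_iff_isChain _).1 (hlen ▸ hstep)
    · exact (forall_ofList_iff _).1 (hlen ▸ hbounds)
    · exact fun k hk => (card_filter_ofList_eq_upcrossings k).symm.trans (hlen ▸ hups k hk)
  · rintro ⟨l, hl, rfl⟩
    rw [admissibleSequences, Set.mem_ofPred_eq, ← hl.length_eq]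
    refine ⟨?_, ?_, (forall_ofList_iff_isChain _).2 hl.isChain,
      (forall_ofList_iff _).2 hl.mem_bounds, fun j => ofList_eq_of_length_lt,
      fun k hk => (card_filter_ofList_eq_upcrossings k).trans (hl.upcrossings_eq k hk)⟩
    · exact Option.some_injective _
        ((head?_eq_some_ofList (hne hl.length_eq)).symm.trans hl.head?_eq)
    · exact Option.some_injective _
        ((getLast?_eq_some_ofList (hne hl.length_eq)).symm.trans hl.getLast?_eq)

end Upcrossing

open Upcrossing

/-- Counting upcrossing orderings: fix integer levels `r ≤ n - 1` (here `r = ρn`) and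
prescribed upcrossing counts `m_k ≥ 1` for `k = r, …, n`. The number of nearest-neighbour
level sequences `s : {1,…,N} → {r−1,…,n}` (normalized to equal `n` outside `{1,…,N}`) with
`s(1) = n−1`, `s(N) = n`, `|s(j+1) − s(j)| = 1`, and exactly `m_k` upcrossings from level
`k−1` to level `k` for each `k ∈ {r,…,n}` (where necessarily `N = 2 Σ_k m_k`), equals
`Π_{k=r}^{n−1} binom(m_{k+1} + m_k − 1, m_k)`. -/
theorem count_upcrossing_orderings (r n : ℤ) (hrn : r ≤ n - 1) (m : ℤ → ℕ)
    (hm : ∀ k ∈ Finset.Icc r n, 1 ≤ m k) :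
    Set.ncard {s : ℕ → ℤ |
        s 1 = n - 1 ∧
        s (2 * ∑ k ∈ Finset.Icc r n, m k) = n ∧
        (∀ j : ℕ, 1 ≤ j → j < 2 * ∑ k ∈ Finset.Icc r n, m k → |s (j + 1) - s j| = 1) ∧
        (∀ j : ℕ, 1 ≤ j → j ≤ 2 * ∑ k ∈ Finset.Icc r n, m k → r - 1 ≤ s j ∧ s j ≤ n) ∧
        (∀ j : ℕ, j = 0 ∨ 2 * ∑ k ∈ Finset.Icc r n, m k < j → s j = n) ∧
        (∀ k ∈ Finset.Icc r n,
          ((Finset.Ico 1 (2 * ∑ k' ∈ Finset.Icc r n, m k')).filter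
            (fun j => s j = k - 1 ∧ s (j + 1) = k)).card = m k)} =
      ∏ k ∈ Finset.Icc r (n - 1), (m (k + 1) + m k - 1).choose (m k) := by
  have hmn : 1 ≤ m n := hm n (Finset.right_mem_Icc.2 (by omega))
  change (admissibleSequences r n m).ncard = _
  rw [admissibleSequences_eq_image (by omega) hmn,
    ((injOn_ofList _).mono fun l hl => hl.length_eq).ncard_image, ← Nat.card_coe_set_eq]
  exact natCard_isUpcrossingPath (by omega) hmn
end
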